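/- arXiv:1001.0366 — 4 statements merged into one kernel-verified Lean document; each statement's English description precedes it below -/
import Mathlib

section
/- For every s ≥ 0, a > 0 and 0 < p < 1, the inequality a·s^p/(a+s) ≤ p^p·(1-p)^(1-p)·a^p holds. -/
/-! Weighted AM–GM with weights `1 - p, p` applied to `a / (1 - p)` and `s / p` gives
`a ^ (1 - p) * s ^ p ≤ (1 - p) ^ (1 - p) * p ^ p * (a + s)`; multiply by `a ^ p`. -/

open Real

lemma rpow_one_sub_mul_rpow_le_mul_add {x y p : ℝ} (hx : 0 ≤ x) (hy : 0 ≤ y)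
    (hp0 : 0 < p) (hp1 : p < 1) :
    x ^ (1 - p) * y ^ p ≤ (1 - p) ^ (1 - p) * p ^ p * (x + y) := by
  have hq : 0 < 1 - p := sub_pos.mpr hp1
  have amgm := geom_mean_le_arith_mean2_weighted hq.le hp0.le
    (div_nonneg hx hq.le) (div_nonneg hy hp0.le) (sub_add_cancel 1 p)
  have hsum : (1 - p) * (x / (1 - p)) + p * (y / p) = x + y := by
    rw [mul_div_cancel₀ _ hq.ne', mul_div_cancel₀ _ hp0.ne']
  rw [hsum, div_rpow hx hq.le, div_rpow hy hp0.le, div_mul_div_comm,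
    div_le_iff₀ (by positivity)] at amgm
  linarith

/-- For every `s ≥ 0`, `a > 0` and `0 < p < 1`,
`a * s^p / (a + s) ≤ p^p * (1-p)^(1-p) * a^p`. -/
theorem a_sp_div_a_add_s_le (a s p : ℝ) (ha : 0 < a) (hs : 0 ≤ s)
    (hp0 : 0 < p) (hp1 : p < 1) :
    a * s ^ p / (a + s) ≤ p ^ p * (1 - p) ^ (1 - p) * a ^ p := by
  rw [div_le_iff₀ (by positivity)]
  have amgm := rpow_one_sub_mul_rpow_le_mul_add ha.le hs hp0 hp1
  calc a * s ^ p = a ^ p * (a ^ (1 - p) * s ^ p) := by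
        rw [← mul_assoc, ← rpow_add ha, add_sub_cancel, rpow_one]
    _ ≤ a ^ p * ((1 - p) ^ (1 - p) * p ^ p * (a + s)) := by gcongr
    _ = p ^ p * (1 - p) ^ (1 - p) * a ^ p * (a + s) := by ring
end

section
/- Let A be a bounded linear operator between Hilbert spaces and a > 0. Then the operator (A*A + aI)^{-1} A* has operator norm at most 1/(2√a). -/
open ContinuousLinearMap Real RealInnerProductSpace

/-! Pairing `(A*A + a I) x = A* z` with `x` gives `‖A x‖² + a‖x‖² = ⟪z, A x⟫ ≤ ‖z‖ ‖A x‖`, and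
maximizing `‖z‖ t - t²` over `t = ‖A x‖` yields `a‖x‖² ≤ ‖z‖² / 4`. -/

theorem two_mul_sqrt_mul_le_of_sq_add_mul_sq_le {a s t c : ℝ} (ha : 0 ≤ a) (hc : 0 ≤ c)
    (h : t ^ 2 + a * s ^ 2 ≤ c * t) : 2 * √a * s ≤ c := by
  have hsq : (2 * √a * s) ^ 2 ≤ c ^ 2 := by
    rw [mul_pow, mul_pow, sq_sqrt ha]
    nlinarith [sq_nonneg (t - c / 2)]
  exact (abs_le_of_sq_le_sq hsq hc).trans' (le_abs_self _)

section

variable {H K : Type*} [NormedAddCommGroup H] [InnerProductSpace ℝ H] [CompleteSpace H]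
  [NormedAddCommGroup K] [InnerProductSpace ℝ K] [CompleteSpace K]

theorem inner_adjoint_comp_add_smul_one_apply_self (A : H →L[ℝ] K) (a : ℝ) (x : H) :
    ⟪(adjoint A ∘L A + a • (1 : H →L[ℝ] H)) x, x⟫ = ‖A x‖ ^ 2 + a * ‖x‖ ^ 2 := by
  rw [add_apply, inner_add_left, comp_apply, adjoint_inner_left, smul_apply, one_apply_eq_self,
    real_inner_smul_left, real_inner_self_eq_norm_sq, real_inner_self_eq_norm_sq]

theorem norm_sq_apply_add_mul_norm_sq_le_of_eq_adjoint_apply {A : H →L[ℝ] K} {a : ℝ} {x : H}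
    {z : K} (hx : (adjoint A ∘L A + a • (1 : H →L[ℝ] H)) x = adjoint A z) :
    ‖A x‖ ^ 2 + a * ‖x‖ ^ 2 ≤ ‖z‖ * ‖A x‖ := by
  rw [← inner_adjoint_comp_add_smul_one_apply_self, hx, adjoint_inner_left]
  exact real_inner_le_norm z (A x)

end

/-- For a bounded linear operator `A` between Hilbert spaces and `a > 0`, the operator
`(A*A + aI)⁻¹ A*` has norm at most `1/(2√a)`: whenever `(A*A + a•I) x = A* z`,
one has `‖x‖ ≤ (1/(2√a)) * ‖z‖`. -/
theorem norm_resolvent_adjoint_le (H K : Type*)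
    [NormedAddCommGroup H] [InnerProductSpace ℝ H] [CompleteSpace H]
    [NormedAddCommGroup K] [InnerProductSpace ℝ K] [CompleteSpace K]
    (A : H →L[ℝ] K) (a : ℝ) (ha : 0 < a)
    (x : H) (z : K)
    (hx : ((ContinuousLinearMap.adjoint A) ∘L A + a • (1 : H →L[ℝ] H)) x
        = (ContinuousLinearMap.adjoint A) z) :
    ‖x‖ ≤ (1 / (2 * Real.sqrt a)) * ‖z‖ := by
  have hbound : 2 * √a * ‖x‖ ≤ ‖z‖ :=
    two_mul_sqrt_mul_le_of_sq_add_mul_sq_le ha.le (norm_nonneg z)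
      (norm_sq_apply_add_mul_norm_sq_le_of_eq_adjoint_apply hx)
  rw [one_div_mul_eq_div, le_div_iff₀' (by positivity)]
  exact hbound
end

section
/- Let A be a bounded injective linear operator between Hilbert spaces, f in the range of A with Ay = f, and suppose y satisfies the source condition y = (A*A)^p w with ‖w‖ ≤ k for some p ∈ (0,1). Then for any a > 0 and any f_δ with ‖f_δ - f‖ ≤ δ, ‖(A*A + aI)^{-1}A* f_δ - y‖ ≤ δ/(2√a) + c_p·k·a^p, where c_p = p^p(1-p)^(1-p). -/
open ContinuousLinearMap

/-! With `T = A*A` and `R = (T + a)⁻¹`, the error splits as `x - y = R A* (fδ - f) - a R T^p w`.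
Both operators are functions of `T`, whose spectrum lies in `[0, ∞)`: by the C*-identity
`‖R A*‖² = ‖R T R‖ = sup s / (s + a)² ≤ 1 / (4a)`, and `‖a R T^p‖ = sup a s^p / (s + a)`, which
weighted AM–GM, `s^p a^(1-p) ≤ p^p (1-p)^(1-p) (s + a)`, bounds by `p^p (1-p)^(1-p) a^p`. -/

theorem rpow_mul_rpow_one_sub_le {s t p : ℝ} (hs : 0 ≤ s) (ht : 0 ≤ t) (hp0 : 0 < p) (hp1 : p < 1) :
    s ^ p * t ^ (1 - p) ≤ p ^ p * (1 - p) ^ (1 - p) * (s + t) := by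
  have hq : 0 < 1 - p := sub_pos.mpr hp1
  have amgm := Real.geom_mean_le_arith_mean2_weighted hp0.le hq.le
    (div_nonneg hs hp0.le) (div_nonneg ht hq.le) (add_sub_cancel p 1)
  rw [mul_div_cancel₀ s hp0.ne', mul_div_cancel₀ t hq.ne'] at amgm
  have hs' : s ^ p = p ^ p * (s / p) ^ p := by
    rw [← Real.mul_rpow hp0.le (div_nonneg hs hp0.le), mul_div_cancel₀ s hp0.ne']
  have ht' : t ^ (1 - p) = (1 - p) ^ (1 - p) * (t / (1 - p)) ^ (1 - p) := by
    rw [← Real.mul_rpow hq.le (div_nonneg ht hq.le), mul_div_cancel₀ t hq.ne']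
  calc s ^ p * t ^ (1 - p)
      = p ^ p * (1 - p) ^ (1 - p) * ((s / p) ^ p * (t / (1 - p)) ^ (1 - p)) := by
        rw [hs', ht']
        ring
    _ ≤ p ^ p * (1 - p) ^ (1 - p) * (s + t) := by gcongr

theorem mul_rpow_div_add_le {a s p : ℝ} (ha : 0 < a) (hs : 0 ≤ s) (hp0 : 0 < p) (hp1 : p < 1) :
    a * s ^ p / (s + a) ≤ p ^ p * (1 - p) ^ (1 - p) * a ^ p := by
  have hsplit : a * s ^ p = s ^ p * a ^ (1 - p) * a ^ p := by
    rw [mul_assoc, ← Real.rpow_add ha, sub_add_cancel, Real.rpow_one, mul_comm]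
  rw [div_le_iff₀ (by positivity), hsplit, mul_right_comm _ (a ^ p)]
  exact mul_le_mul_of_nonneg_right (rpow_mul_rpow_one_sub_le hs ha.le hp0 hp1) (by positivity)

theorem div_add_sq_le {a s : ℝ} (ha : 0 < a) : s / (s + a) ^ 2 ≤ 1 / (4 * a) := by
  rcases eq_or_ne (s + a) 0 with h | h
  · rw [h, zero_pow two_ne_zero, div_zero]
    positivity
  rw [div_le_div_iff₀ (by positivity) (by positivity)]
  nlinarith [four_mul_le_sq_add s a]

section CStarAlgebra

variable {E : Type*} [CStarAlgebra E] [PartialOrder E] [StarOrderedRing E] {T : E} {a : ℝ}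

theorem continuousOn_inv_add_spectrum_of_nonneg (hT : 0 ≤ T) (ha : 0 < a) :
    ContinuousOn (fun s : ℝ => (s + a)⁻¹) (spectrum ℝ T) :=
  ContinuousOn.inv₀ (by fun_prop) fun s hs =>
    (add_pos_of_nonneg_of_pos (spectrum_nonneg_of_nonneg hT hs) ha).ne'

theorem cfc_inv_add_mul_add_smul_one (hT : 0 ≤ T) (ha : 0 < a) :
    cfc (fun s : ℝ => (s + a)⁻¹) T * (T + a • 1) = 1 := by
  have hsum : T + a • 1 = cfc (fun s : ℝ => s + a) T := by
    rw [cfc_add_const a _ T, cfc_id' ℝ T, Algebra.algebraMap_eq_smul_one]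
  rw [hsum, ← cfc_mul _ _ T (continuousOn_inv_add_spectrum_of_nonneg hT ha)]
  refine (cfc_congr fun s hs => ?_).trans (cfc_const_one ℝ T)
  exact inv_mul_cancel₀ (add_pos_of_nonneg_of_pos (spectrum_nonneg_of_nonneg hT hs) ha).ne'

theorem norm_cfc_inv_add_mul_mul_cfc_inv_add_le (hT : 0 ≤ T) (ha : 0 < a) :
    ‖cfc (fun s : ℝ => (s + a)⁻¹) T * T * cfc (fun s : ℝ => (s + a)⁻¹) T‖ ≤ 1 / (4 * a) := by
  have hcont := continuousOn_inv_add_spectrum_of_nonneg hT ha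
  nth_rewrite 2 [← cfc_id' ℝ T]
  have hcont' : ContinuousOn (fun s : ℝ => (s + a)⁻¹ * s) (spectrum ℝ T) :=
    hcont.mul continuousOn_id
  rw [← cfc_mul _ _ T hcont, ← cfc_mul _ _ T hcont' hcont]
  refine norm_cfc_le (by positivity) fun s hs => ?_
  have hs0 := spectrum_nonneg_of_nonneg hT hs
  rw [Real.norm_of_nonneg (by positivity)]
  convert div_add_sq_le (s := s) ha using 1
  rw [div_eq_mul_inv, ← inv_pow]
  ring

theorem norm_smul_cfc_inv_add_mul_cfc_rpow_le (hT : 0 ≤ T) (ha : 0 < a) {p : ℝ}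
    (hp0 : 0 < p) (hp1 : p < 1) :
    ‖a • (cfc (fun s : ℝ => (s + a)⁻¹) T * cfc (fun s : ℝ => s ^ p) T)‖
      ≤ p ^ p * (1 - p) ^ (1 - p) * a ^ p := by
  have hinv := continuousOn_inv_add_spectrum_of_nonneg hT ha
  have hrpow : ContinuousOn (fun s : ℝ => s ^ p) (spectrum ℝ T) :=
    (Real.continuous_rpow_const hp0.le).continuousOn
  have hcont : ContinuousOn (fun s : ℝ => (s + a)⁻¹ * s ^ p) (spectrum ℝ T) := hinv.mul hrpow
  rw [← cfc_mul _ _ T hinv hrpow, ← cfc_smul a _ T hcont]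
  refine norm_cfc_le (by positivity) fun s hs => ?_
  have hs0 := spectrum_nonneg_of_nonneg hT hs
  rw [Real.norm_of_nonneg (by positivity)]
  convert mul_rpow_div_add_le ha hs0 hp0 hp1 using 1
  simp only [smul_eq_mul]
  ring

end CStarAlgebra

section Operator

variable {H K : Type*} [NormedAddCommGroup H] [InnerProductSpace ℂ H] [CompleteSpace H]
  [NormedAddCommGroup K] [InnerProductSpace ℂ K] [CompleteSpace K]

theorem norm_comp_adjoint_sq (B : H →L[ℂ] H) (A : H →L[ℂ] K) :
    ‖B ∘L adjoint A‖ ^ 2 = ‖B * (adjoint A ∘L A) * adjoint B‖ := by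
  have := norm_adjoint_comp_self (adjoint (B ∘L adjoint A))
  rw [adjoint_adjoint, adjoint.norm_map, adjoint_comp, adjoint_adjoint] at this
  rw [sq, ← this]
  rfl

theorem norm_cfc_inv_add_comp_adjoint_le (A : H →L[ℂ] K) {a : ℝ} (ha : 0 < a) :
    ‖cfc (fun s : ℝ => (s + a)⁻¹) (adjoint A ∘L A) ∘L adjoint A‖ ≤ 1 / (2 * √a) := by
  have hT : 0 ≤ adjoint A ∘L A := (nonneg_iff_isPositive _).mpr (isPositive_adjoint_comp_self A)
  have hB : IsSelfAdjoint (cfc (fun s : ℝ => (s + a)⁻¹) (adjoint A ∘L A)) := cfc_predicate _ _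
  have hsq : ‖cfc (fun s : ℝ => (s + a)⁻¹) (adjoint A ∘L A) ∘L adjoint A‖ ^ 2
      ≤ (1 / (2 * √a)) ^ 2 := by
    rw [norm_comp_adjoint_sq, hB.adjoint_eq, div_pow, mul_pow, Real.sq_sqrt ha.le]
    refine (norm_cfc_inv_add_mul_mul_cfc_inv_add_le hT ha).trans_eq ?_
    norm_num
  exact (pow_le_pow_iff_left₀ (norm_nonneg _) (by positivity) two_ne_zero).mp hsq

theorem sub_eq_of_mul_adjoint_comp_self_add_smul_one_eq_one (A : H →L[ℂ] K) {a : ℝ}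
    {B : H →L[ℂ] H} (hB : B * (adjoint A ∘L A + a • 1) = 1) {x y : H} {g : K}
    (hx : (adjoint A ∘L A + a • 1) x = adjoint A g) :
    x - y = B (adjoint A (g - A y)) - a • B y := by
  have hres : (adjoint A ∘L A + a • 1) (x - y) = adjoint A (g - A y) - a • y := by
    rw [map_sub, hx, map_sub]
    simp only [add_apply, smul_apply, one_apply_eq_self, comp_apply]
    abel
  calc x - y = (B * (adjoint A ∘L A + a • 1)) (x - y) := by rw [hB, one_apply_eq_self]
    _ = B (adjoint A (g - A y)) - a • B y := by
      rw [mul_apply_eq_comp, hres, map_sub, map_smul_of_tower]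

end Operator

theorem regularization_error_bound_general (H K : Type*)
    [NormedAddCommGroup H] [InnerProductSpace ℂ H] [CompleteSpace H]
    [NormedAddCommGroup K] [InnerProductSpace ℂ K] [CompleteSpace K]
    (A : H →L[ℂ] K)
    (p k a δ : ℝ) (hp0 : 0 < p) (hp1 : p < 1) (ha : 0 < a)
    (w y : H) (hw : ‖w‖ ≤ k)
    (hy : y = cfc (fun s : ℝ => s ^ p) ((ContinuousLinearMap.adjoint A) ∘L A) w)
    (f fδ : K) (hf : A y = f) (hfδ : ‖fδ - f‖ ≤ δ)
    (x : H)
    (hx : ((ContinuousLinearMap.adjoint A) ∘L A + a • (1 : H →L[ℂ] H)) x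
        = (ContinuousLinearMap.adjoint A) fδ) :
    ‖x - y‖ ≤ δ / (2 * Real.sqrt a) + p ^ p * (1 - p) ^ (1 - p) * k * a ^ p := by
  subst hf
  set T := adjoint A ∘L A
  have hT : 0 ≤ T := (nonneg_iff_isPositive T).mpr (isPositive_adjoint_comp_self A)
  set B := cfc (fun s : ℝ => (s + a)⁻¹) T
  have hdata : ‖B (adjoint A (fδ - A y))‖ ≤ δ / (2 * √a) :=
    calc ‖(B ∘L adjoint A) (fδ - A y)‖ ≤ ‖B ∘L adjoint A‖ * ‖fδ - A y‖ := le_opNorm _ _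
      _ ≤ 1 / (2 * √a) * δ :=
        mul_le_mul (norm_cfc_inv_add_comp_adjoint_le A ha) hfδ (norm_nonneg _) (by positivity)
      _ = δ / (2 * √a) := by ring
  have hsource : ‖a • B y‖ ≤ p ^ p * (1 - p) ^ (1 - p) * k * a ^ p := by
    rw [hy]
    calc ‖(a • (B * cfc (fun s : ℝ => s ^ p) T)) w‖
        ≤ ‖a • (B * cfc (fun s : ℝ => s ^ p) T)‖ * ‖w‖ := le_opNorm _ _
      _ ≤ p ^ p * (1 - p) ^ (1 - p) * a ^ p * k :=
        mul_le_mul (norm_smul_cfc_inv_add_mul_cfc_rpow_le hT ha hp0 hp1) hw (norm_nonneg _)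
          (by positivity)
      _ = p ^ p * (1 - p) ^ (1 - p) * k * a ^ p := by ring
  calc ‖x - y‖ = ‖B (adjoint A (fδ - A y)) - a • B y‖ := by
        rw [sub_eq_of_mul_adjoint_comp_self_add_smul_one_eq_one A
          (cfc_inv_add_mul_add_smul_one hT ha) hx]
    _ ≤ ‖B (adjoint A (fδ - A y))‖ + ‖a • B y‖ := norm_sub_le _ _
    _ ≤ δ / (2 * √a) + p ^ p * (1 - p) ^ (1 - p) * k * a ^ p := add_le_add hdata hsource

/-- Error estimate for Tikhonov-type regularization under the source condition
`y = (A*A)^p w`, `‖w‖ ≤ k`: if `Ay = f`, `‖fδ - f‖ ≤ δ` and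
`(A*A + a•I) x = A* fδ`, then `‖x - y‖ ≤ δ/(2√a) + c_p k a^p`. -/
theorem regularization_error_bound (H K : Type*)
    [NormedAddCommGroup H] [InnerProductSpace ℂ H] [CompleteSpace H]
    [NormedAddCommGroup K] [InnerProductSpace ℂ K] [CompleteSpace K]
    (A : H →L[ℂ] K) (hA : Function.Injective A)
    (p k a δ : ℝ) (hp0 : 0 < p) (hp1 : p < 1) (hk : 0 < k) (ha : 0 < a) (hδ : 0 < δ)
    (w y : H) (hw : ‖w‖ ≤ k)
    (hy : y = cfc (fun s : ℝ => s ^ p) ((ContinuousLinearMap.adjoint A) ∘L A) w)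
    (f fδ : K) (hf : A y = f) (hfδ : ‖fδ - f‖ ≤ δ)
    (x : H)
    (hx : ((ContinuousLinearMap.adjoint A) ∘L A + a • (1 : H →L[ℂ] H)) x
        = (ContinuousLinearMap.adjoint A) fδ) :
    ‖x - y‖ ≤ δ / (2 * Real.sqrt a) + p ^ p * (1 - p) ^ (1 - p) * k * a ^ p :=
  regularization_error_bound_general H K A p k a δ hp0 hp1 ha w y hw hy f fδ hf hfδ x hx
end

section
/- For a bounded linear operator A between Hilbert spaces and a > 0, every z in the codomain satisfies ‖(A*A + aI)^{-1}A* z‖² ≤ (1/(4a))·‖z‖². Equivalently, the function s ↦ s/(s+a)² on [0,∞) is bounded by 1/(4a). -/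
/-!
Pairing the normal equation `A*A x + a x = A* z` with `x` gives
`‖A x‖² + a‖x‖² = ⟪z, A x⟫ ≤ ‖z‖‖A x‖`, and `‖z‖‖A x‖ - ‖A x‖² ≤ ‖z‖²/4`
(the same AM-GM step as `4as ≤ (s + a)²`, which is the scalar bound).
-/

open ContinuousLinearMap
open scoped InnerProductSpace

theorem div_add_sq_le_one_div_four_mul {R : Type*} [Field R] [LinearOrder R]
    [IsStrictOrderedRing R] {s a : R} (hs : 0 ≤ s) (ha : 0 < a) :
    s / (s + a) ^ 2 ≤ 1 / (4 * a) := by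
  rw [div_le_div_iff₀ (by positivity) (by positivity), one_mul, ← mul_assoc, mul_comm s]
  exact four_mul_le_sq_add s a

section NormalEquation

variable {H K : Type*} [NormedAddCommGroup H] [InnerProductSpace ℝ H] [CompleteSpace H]
  [NormedAddCommGroup K] [InnerProductSpace ℝ K] [CompleteSpace K]
  {A : H →L[ℝ] K} {a : ℝ} {x : H} {z : K}

theorem norm_apply_sq_add_mul_norm_sq_eq_inner (h : (adjoint A ∘L A + a • 1) x = adjoint A z) :
    ‖A x‖ ^ 2 + a * ‖x‖ ^ 2 = ⟪z, A x⟫_ℝ := by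
  have hx := congrArg (fun y => ⟪y, x⟫_ℝ) h
  simpa only [add_apply, comp_apply, smul_apply, one_apply_eq_self, inner_add_left,
    real_inner_smul_left, adjoint_inner_left, real_inner_self_eq_norm_sq] using hx

theorem four_mul_mul_norm_sq_le_norm_sq (h : (adjoint A ∘L A + a • 1) x = adjoint A z) :
    4 * a * ‖x‖ ^ 2 ≤ ‖z‖ ^ 2 := by
  have h_le : ‖A x‖ ^ 2 + a * ‖x‖ ^ 2 ≤ ‖z‖ * ‖A x‖ :=
    (norm_apply_sq_add_mul_norm_sq_eq_inner h).trans_le (real_inner_le_norm z (A x))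
  nlinarith [sq_nonneg (‖z‖ - 2 * ‖A x‖)]

end NormalEquation

/-- For a bounded operator `A` between Hilbert spaces and `a > 0`,
`‖(A*A + aI)⁻¹ A* z‖² ≤ ‖z‖²/(4a)` for every `z`; the key scalar estimate
`s/(s+a)² ≤ 1/(4a)` for `s ≥ 0` is included. -/
theorem resolvent_adjoint_sq_bound (H K : Type*)
    [NormedAddCommGroup H] [InnerProductSpace ℝ H] [CompleteSpace H]
    [NormedAddCommGroup K] [InnerProductSpace ℝ K] [CompleteSpace K]
    (A : H →L[ℝ] K) (a : ℝ) (ha : 0 < a) :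
    (∀ (z : K) (x : H),
      ((ContinuousLinearMap.adjoint A) ∘L A + a • (1 : H →L[ℝ] H)) x
          = (ContinuousLinearMap.adjoint A) z →
        ‖x‖ ^ 2 ≤ (1 / (4 * a)) * ‖z‖ ^ 2) ∧
    (∀ s : ℝ, 0 ≤ s → s / (s + a) ^ 2 ≤ 1 / (4 * a)) := by
  refine ⟨fun z x h => ?_, fun s hs => div_add_sq_le_one_div_four_mul hs ha⟩
  rw [one_div_mul_eq_div, le_div_iff₀ (by positivity), mul_comm]
  exact four_mul_mul_norm_sq_le_norm_sq h
end
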